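/- arXiv:2206.08396 — 3 statements merged into one kernel-verified Lean document; each statement's English description precedes it below -/
import Mathlib

section
/- Let V be a nonempty finite index set, Z = (z_{i,l})_{i,l∈V} a matrix of nonnegative real numbers, d = (d_{i,j})_{i,j∈V} a family of positive real numbers, ε a real number, and δ a natural number. Assume that for every i ∈ V and every subset S ⊆ V with |S| ≤ δ one has Σ_{l∈S} z_{i,l} < 1, and define for all i, j ∈ V the reserved privacy budget ε_{i,j} = (1/d_{i,j})·ln( max over all subsets S ⊆ V with |S| ≤ δ of (1 − Σ_{l∈S} z_{j,l})/(1 − Σ_{l∈S} z_{i,l}) ). If for all i, j, k ∈ V it holds that z_{i,k} ≤ e^{(ε − ε_{i,j})·d_{i,j}} · z_{j,k}, then Z is δ-prunable: for every subset S ⊆ V with |S| ≤ δ and all i, j, k ∈ V, z_{i,k}/(1 − Σ_{l∈S} z_{i,l}) ≤ e^{ε·d_{i,j}} · z_{j,k}/(1 − Σ_{l∈S} z_{j,l}). -/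
open Finset

/-!
With `A_i = 1 - ∑_{l ∈ S} z_{i,l}` the mass left in row `i` after pruning `S`, pruning rescales
row `i` by `1 / A_i`. The reserved budget is chosen so that `exp (-ε_{i,j} d_{i,j}) = 1 / M`, where
`M` is the largest ratio `A_j / A_i` over all admissible `S`; hence the tightened Geo-Ind constraint
`z_{i,k} ≤ exp (ε d_{i,j}) / M · z_{j,k}` already pays for the worst rescaling factor.
-/

theorem Real.exp_sub_one_div_mul_log_mul {ε d M : ℝ} (hd : d ≠ 0) (hM : 0 < M) :
    Real.exp ((ε - 1 / d * Real.log M) * d) = Real.exp (ε * d) / M := by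
  rw [sub_mul, Real.exp_sub, one_div_mul_eq_div, div_mul_cancel₀ _ hd, Real.exp_log hM]

theorem div_le_mul_div_of_le_div_mul {K : Type*} [Field K] [LinearOrder K] [IsStrictOrderedRing K]
    {x y a b c M : K} (ha : 0 < a) (hb : 0 < b) (hc : 0 ≤ c) (hy : 0 ≤ y) (hM : 0 < M)
    (hx : x ≤ c / M * y) (hba : b / a ≤ M) : x / a ≤ c * (y / b) := by
  have hb_le : b ≤ M * a := (div_le_iff₀ ha).1 hba
  calc x / a ≤ c / M * y / a := by gcongr
    _ = c * y / (M * a) := by field_simp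
    _ ≤ c * y / b := by gcongr
    _ = c * (y / b) := mul_div_assoc _ _ _

/-- **Prop. 2 (δ-prunability).** If the Geo-Ind constraints hold with the
reserved privacy budget `ε_{i,j}` subtracted from the budget `ε`, then the
obfuscation matrix stays `ε`-Geo-Indistinguishable after pruning any subset
of at most `δ` locations. -/
theorem delta_prunable_of_reserved_budget
    {V : Type*} [Fintype V]
    (z : V → V → ℝ) (d : V → V → ℝ) (ε : ℝ) (δ : ℕ)
    (hz : ∀ i l, 0 ≤ z i l)
    (hd : ∀ i j, 0 < d i j)
    (hsum : ∀ (i : V) (S : Finset V), S.card ≤ δ → ∑ l ∈ S, z i l < 1)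
    (εres : V → V → ℝ)
    (hεres : ∀ i j, εres i j = (1 / d i j) *
      Real.log (((Finset.univ : Finset (Finset V)).filter (fun S => S.card ≤ δ)).sup'
        ⟨∅, by simp⟩
        (fun S => (1 - ∑ l ∈ S, z j l) / (1 - ∑ l ∈ S, z i l))))
    (hGeo : ∀ i j k, z i k ≤ Real.exp ((ε - εres i j) * d i j) * z j k) :
    ∀ (S : Finset V), S.card ≤ δ → ∀ i j k,
      z i k / (1 - ∑ l ∈ S, z i l) ≤
        Real.exp (ε * d i j) * (z j k / (1 - ∑ l ∈ S, z j l)) := by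
  intro S hS i j k
  have hAi : 0 < 1 - ∑ l ∈ S, z i l := sub_pos.2 (hsum i S hS)
  have hAj : 0 < 1 - ∑ l ∈ S, z j l := sub_pos.2 (hsum j S hS)
  set M := ((Finset.univ : Finset (Finset V)).filter (fun T => T.card ≤ δ)).sup' ⟨∅, by simp⟩
    (fun T => (1 - ∑ l ∈ T, z j l) / (1 - ∑ l ∈ T, z i l))
  have hratio : (1 - ∑ l ∈ S, z j l) / (1 - ∑ l ∈ S, z i l) ≤ M :=
    le_sup' (fun T => (1 - ∑ l ∈ T, z j l) / (1 - ∑ l ∈ T, z i l)) (by simp [hS])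
  have hM : 0 < M := (div_pos hAj hAi).trans_le hratio
  have hGeo_ij := hGeo i j k
  rw [hεres, Real.exp_sub_one_div_mul_log_mul (hd i j).ne' hM] at hGeo_ij
  exact div_le_mul_div_of_le_div_mul hAi hAj (Real.exp_pos _).le (hz j k) hM hGeo_ij hratio
end

section
/- Let Λ (leaf locations) and W (coarse locations) be nonempty finite index sets, r : Λ → W a surjection, p : Λ → ℝ nonnegative priors with P_i = Σ_{u∈Λ, r(u)=i} p_u > 0 for every i ∈ W, c > 0 a real number, and Z⁰ = (z⁰_{u,v})_{u,v∈Λ} a matrix of nonnegative reals satisfying z⁰_{u,w} ≤ c·z⁰_{v,w} for all u, v, w ∈ Λ. Define z^l_{i,j} = ( Σ_{u∈Λ, r(u)=i} p_u · Σ_{v∈Λ, r(v)=j} z⁰_{u,v} ) / P_i for i, j ∈ W. Then z^l_{i,k} ≤ c·z^l_{j,k} for all i, j, k ∈ W; that is, matrix precision reduction preserves ε-Geo-Indistinguishability (taking c = e^{ε}). -/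
open Finset

/-!
Writing `S u = ∑_{r v = k} z⁰ u v`, the entry `z^l_{i,k}` is the `p`-weighted average of `S` over
the fiber of `i`. Summing `z⁰ u w ≤ c * z⁰ v w` over the fiber of `k` gives `S u ≤ c * S v`, and
a pointwise bound `f u ≤ c * g v` between all pairs of points passes to weighted averages, by
multiplying it with `a u * b v` and summing over both fibers.
-/

theorem Finset.weighted_average_le_mul_weighted_average {ι κ : Type*} {s : Finset ι}
    {t : Finset κ} {a : ι → ℝ} {b : κ → ℝ} (ha : ∀ u ∈ s, 0 ≤ a u) (hb : ∀ v ∈ t, 0 ≤ b v)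
    (hA : 0 < ∑ u ∈ s, a u) (hB : 0 < ∑ v ∈ t, b v) {f : ι → ℝ} {g : κ → ℝ} {c : ℝ}
    (h : ∀ u ∈ s, ∀ v ∈ t, f u ≤ c * g v) :
    (∑ u ∈ s, a u * f u) / ∑ u ∈ s, a u ≤ c * ((∑ v ∈ t, b v * g v) / ∑ v ∈ t, b v) := by
  rw [mul_div_assoc', div_le_div_iff₀ hA hB]
  calc (∑ u ∈ s, a u * f u) * ∑ v ∈ t, b v
      = ∑ u ∈ s, ∑ v ∈ t, a u * b v * f u := by
        rw [sum_mul_sum]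
        exact sum_congr rfl fun _ _ => sum_congr rfl fun _ _ => by ring
    _ ≤ ∑ u ∈ s, ∑ v ∈ t, a u * b v * (c * g v) :=
        sum_le_sum fun u hu => sum_le_sum fun v hv =>
          mul_le_mul_of_nonneg_left (h u hu v hv) (mul_nonneg (ha u hu) (hb v hv))
    _ = c * (∑ v ∈ t, b v * g v) * ∑ u ∈ s, a u := by
        rw [mul_assoc, mul_comm _ (∑ u ∈ s, a u), sum_mul_sum, mul_sum]
        refine sum_congr rfl fun _ _ => ?_
        rw [mul_sum]
        exact sum_congr rfl fun _ _ => by ring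

theorem precision_reduction_preserves_geoInd_general
    {Λ W : Type*} [Fintype Λ] [DecidableEq W]
    (r : Λ → W)
    (p : Λ → ℝ) (hp : ∀ u, 0 ≤ p u)
    (P : W → ℝ)
    (hP : ∀ i, P i = ∑ u ∈ Finset.univ.filter (fun u => r u = i), p u)
    (hPpos : ∀ i, 0 < P i)
    (c : ℝ)
    (z0 : Λ → Λ → ℝ)
    (hGeo : ∀ u v w, z0 u w ≤ c * z0 v w)
    (zl : W → W → ℝ)
    (hzl : ∀ i j, zl i j =
      (∑ u ∈ Finset.univ.filter (fun u => r u = i),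
        p u * ∑ v ∈ Finset.univ.filter (fun v => r v = j), z0 u v) / P i) :
    ∀ i j k, zl i k ≤ c * zl j k := by
  intro i j k
  have hPi := hPpos i
  have hPj := hPpos j
  rw [hP] at hPi hPj
  rw [hzl, hzl, hP i, hP j]
  refine weighted_average_le_mul_weighted_average (fun u _ => hp u) (fun v _ => hp v) hPi hPj
    fun u _ v _ => ?_
  rw [mul_sum]
  exact sum_le_sum fun w _ => hGeo u v w

/-- **Prop. 4, part 2.** Matrix precision reduction preserves the
`ε`-Geo-Indistinguishability constraint with uniform factor `c = e^ε`:
if `z0 u w ≤ c * z0 v w` for all leaves, then the precision-reduced matrix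
satisfies `zl i k ≤ c * zl j k` for all coarse locations. -/
theorem precision_reduction_preserves_geoInd
    {Λ W : Type*} [Fintype Λ] [Fintype W] [Nonempty Λ] [Nonempty W] [DecidableEq W]
    (r : Λ → W) (hr : Function.Surjective r)
    (p : Λ → ℝ) (hp : ∀ u, 0 ≤ p u)
    (P : W → ℝ)
    (hP : ∀ i, P i = ∑ u ∈ Finset.univ.filter (fun u => r u = i), p u)
    (hPpos : ∀ i, 0 < P i)
    (c : ℝ) (hc : 0 < c)
    (z0 : Λ → Λ → ℝ) (hz0 : ∀ u v, 0 ≤ z0 u v)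
    (hGeo : ∀ u v w, z0 u w ≤ c * z0 v w)
    (zl : W → W → ℝ)
    (hzl : ∀ i j, zl i j =
      (∑ u ∈ Finset.univ.filter (fun u => r u = i),
        p u * ∑ v ∈ Finset.univ.filter (fun v => r v = j), z0 u v) / P i) :
    ∀ i j k, zl i k ≤ c * zl j k :=
  precision_reduction_preserves_geoInd_general r p hp P hP hPpos c z0 hGeo zl hzl
end

section
/- Let V be a nonempty finite index set, Z = (z_{i,l})_{i,l∈V} a matrix of nonnegative real numbers, d = (d_{i,j})_{i,j∈V} a family of positive real numbers, ε a real number, and δ a natural number. Assume Σ_{l∈S} z_{i,l} < 1 for every i ∈ V and every subset S ⊆ V with |S| ≤ δ, and let ε_{i,j} = (1/d_{i,j})·ln( max over all subsets S ⊆ V with |S| ≤ δ of (1 − Σ_{l∈S} z_{j,l})/(1 − Σ_{l∈S} z_{i,l}) ). Suppose B = (B_{i,j})_{i,j∈V} is any family of real numbers with B_{i,j} ≥ ε_{i,j} for all i, j, and that for all i, j, k ∈ V it holds that z_{i,k} ≤ e^{(ε − B_{i,j})·d_{i,j}}·z_{j,k}. Then Z is δ-prunable: for every subset S ⊆ V with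 |S| ≤ δ and all i, j, k ∈ V, z_{i,k}/(1 − Σ_{l∈S} z_{i,l}) ≤ e^{ε·d_{i,j}}·z_{j,k}/(1 − Σ_{l∈S} z_{j,l}). -/
/-!
Pruning `S` divides row `i` by `1 - ∑_{l∈S} z i l`, so the pruned Geo-Ind constraint between
`i` and `j` loses exactly the factor `(1 - ∑_{l∈S} z j l) / (1 - ∑_{l∈S} z i l)`. By the
definition of the reserved budget this factor is at most `exp (εres i j * d i j)`, hence at most
`exp (B i j * d i j)`, and the constraint tightened by `B i j` absorbs it.
-/

open Finset

lemma div_le_mul_mul_div_of_le_mul_of_div_le {a c A C s t : ℝ} (hs : 0 ≤ s) (hc : 0 ≤ c)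
    (hA : 0 < A) (hC : 0 < C) (hac : a ≤ s * c) (hCA : C / A ≤ t) :
    a / A ≤ s * t * (c / C) := by
  have hCt : C ≤ t * A := (div_le_iff₀ hA).mp hCA
  rw [mul_div_assoc', div_le_div_iff₀ hA hC]
  calc a * C ≤ (s * c) * (t * A) := mul_le_mul hac hCt hC.le (mul_nonneg hs hc)
    _ = s * t * c * A := by ring

lemma le_exp_mul_of_inv_mul_log_sup'_le {ι : Type*} {s : Finset ι} (H : s.Nonempty)
    {f : ι → ℝ} {x : ι} (hx : x ∈ s) (hfx : 0 < f x) {b d : ℝ} (hd : 0 < d)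
    (hb : 1 / d * Real.log (s.sup' H f) ≤ b) :
    f x ≤ Real.exp (b * d) := by
  have hle : f x ≤ s.sup' H f := le_sup' f hx
  calc f x ≤ s.sup' H f := hle
    _ = Real.exp (1 / d * Real.log (s.sup' H f) * d) := by
      rw [one_div_mul_eq_div, div_mul_cancel₀ _ hd.ne', Real.exp_log (hfx.trans_le hle)]
    _ ≤ Real.exp (b * d) := Real.exp_le_exp.mpr (mul_le_mul_of_nonneg_right hb hd.le)

/-- Imposing the Geo-Ind constraints with *any* upper bound `B_{i,j}` on the
reserved privacy budget `ε_{i,j}` (in particular with the approximation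
`ε'_{i,j}`) is still a sufficient condition for `δ`-prunability. -/
theorem delta_prunable_of_budget_upper_bound
    {V : Type*} [Fintype V] [DecidableEq V]
    (z : V → V → ℝ) (d : V → V → ℝ) (ε : ℝ) (δ : ℕ)
    (hz : ∀ i l, 0 ≤ z i l)
    (hd : ∀ i j, 0 < d i j)
    (hsum : ∀ (i : V) (S : Finset V), S.card ≤ δ → ∑ l ∈ S, z i l < 1)
    (εres : V → V → ℝ)
    (hεres : ∀ i j, εres i j = (1 / d i j) *
      Real.log (((Finset.univ : Finset (Finset V)).filter (fun S => S.card ≤ δ)).sup'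
        ⟨∅, by simp⟩
        (fun S => (1 - ∑ l ∈ S, z j l) / (1 - ∑ l ∈ S, z i l))))
    (B : V → V → ℝ)
    (hB : ∀ i j, εres i j ≤ B i j)
    (hGeo : ∀ i j k, z i k ≤ Real.exp ((ε - B i j) * d i j) * z j k) :
    ∀ (S : Finset V), S.card ≤ δ → ∀ i j k,
      z i k / (1 - ∑ l ∈ S, z i l) ≤
        Real.exp (ε * d i j) * (z j k / (1 - ∑ l ∈ S, z j l)) := by
  intro S hS i j k
  have hA : 0 < 1 - ∑ l ∈ S, z i l := sub_pos.mpr (hsum i S hS)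
  have hC : 0 < 1 - ∑ l ∈ S, z j l := sub_pos.mpr (hsum j S hS)
  have hratio : (1 - ∑ l ∈ S, z j l) / (1 - ∑ l ∈ S, z i l) ≤ Real.exp (B i j * d i j) :=
    le_exp_mul_of_inv_mul_log_sup'_le
      (f := fun T => (1 - ∑ l ∈ T, z j l) / (1 - ∑ l ∈ T, z i l))
      _ (by simpa using hS) (div_pos hC hA) (hd i j) (hεres i j ▸ hB i j)
  have hexp :
      Real.exp ((ε - B i j) * d i j) * Real.exp (B i j * d i j) = Real.exp (ε * d i j) := by
    rw [← Real.exp_add]; ring_nf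
  simpa only [hexp] using div_le_mul_mul_div_of_le_mul_of_div_le (Real.exp_pos _).le (hz j k)
    hA hC (hGeo i j k) hratio
end
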